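/- arXiv:1905.12542 — 2 statements merged into one kernel-verified Lean document; each statement's English description precedes it below -/
import Mathlib

section
/- Every point of a nonempty rational polyhedral set P ⊆ ℝ^n is a convex combination of finitely many points of P ∩ ℚ^n; that is, there exist rational points q₁, …, q_r ∈ P ∩ ℚ^n and positive reals c₁, …, c_r with Σ c_α = 1 and x = Σ c_α q_α. -/
/-!
Induct on the number of constraints that are slack at `x`. If some rational direction `w`
annihilates the rows tight at `x` but not all rows, move from `x` along `w` (and along `-w`) until
a new constraint becomes tight: the points reached have fewer slack constraints, and `x` lies on
the segment between them, or, when the polyhedron is unbounded along `-w`, is obtained from one of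
them by a translation along the rational recession direction `-w`; the hull of `P ∩ ℚⁿ` is stable
under such translations since `P ∩ ℚⁿ` is stable under `+ w` and one can interpolate with `+ N • w`
for an integer `N`.

Otherwise, put `q = π ∘ x` for a `ℚ`-linear retraction `π : ℝ → ℚ` and expand the entries of
`x - q` in a `ℚ`-basis `(eₗ)` of their `ℚ`-span: `x = q + ∑ eₗ • wₗ` with `q` and the `wₗ` rational,
and every rational affine relation satisfied by `x` is satisfied by `q`, its linear part by each
`wₗ`. Hence `q ∈ P` and every `wₗ` is a lineality direction of `P`, so `x` lies in the hull.
-/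

open Finset Matrix Pointwise

section FieldExtension

variable {K L : Type*} [Field K] [Field L] [Algebra K L] {n : Type*} [Fintype n]

theorem exists_eq_sum_smul_algebraMap_comp (y : n → L) :
    ∃ (k : ℕ) (e : Fin k → L) (w : Fin k → n → K),
      y = ∑ l, e l • (algebraMap K L ∘ w l) ∧
      ∀ a : n → K, (algebraMap K L ∘ a) ⬝ᵥ y = 0 → ∀ l, a ⬝ᵥ w l = 0 := by
  set W := Submodule.span K (Set.range y)
  have : FiniteDimensional K W := FiniteDimensional.span_of_finite K (Set.finite_range y)
  let B := Module.finBasis K W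
  let y' : n → W := fun j => ⟨y j, Submodule.subset_span ⟨j, rfl⟩⟩
  refine ⟨_, fun l => B l, fun l j => B.repr (y' j) l, ?_, fun a ha l => ?_⟩
  · ext j
    calc y j = ((∑ l, B.repr (y' j) l • B l : W) : L) := by rw [B.sum_repr]
      _ = _ := by
        simp only [Finset.sum_apply, Pi.smul_apply, Function.comp_apply, smul_eq_mul]
        simp only [Submodule.coe_sum, Submodule.coe_smul, Algebra.smul_def, mul_comm]
  · have hzero : ∑ j, a j • y' j = 0 := by
      ext
      simpa [dotProduct, Algebra.smul_def] using ha
    simpa [dotProduct, map_sum, mul_comm] using congrArg (fun z => B.repr z l) hzero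

theorem exists_eq_algebraMap_comp_add_sum_smul (x : n → L) :
    ∃ (q : n → K) (k : ℕ) (e : Fin k → L) (w : Fin k → n → K),
      x = algebraMap K L ∘ q + ∑ l, e l • (algebraMap K L ∘ w l) ∧
      ∀ (a : n → K) (c : K), (algebraMap K L ∘ a) ⬝ᵥ x = algebraMap K L c →
        a ⬝ᵥ q = c ∧ ∀ l, a ⬝ᵥ w l = 0 := by
  obtain ⟨π, hπ⟩ := (Algebra.linearMap K L).exists_leftInverse_of_injective
    (LinearMap.ker_eq_bot.mpr (algebraMap K L).injective)
  have hπc (c : K) : π (algebraMap K L c) = c := LinearMap.congr_fun hπ c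
  set q := π ∘ x
  have hq (a : n → K) (c : K) (h : (algebraMap K L ∘ a) ⬝ᵥ x = algebraMap K L c) :
      a ⬝ᵥ q = c := by
    have := congrArg π h
    simpa [dotProduct, map_sum, ← Algebra.smul_def, hπc, q] using this
  obtain ⟨k, e, w, hy, hw⟩ :=
    exists_eq_sum_smul_algebraMap_comp (K := K) (x - algebraMap K L ∘ q)
  refine ⟨q, k, e, w, by rw [← hy, add_sub_cancel], fun a c h => ⟨hq a c h, hw a ?_⟩⟩
  rw [dotProduct_sub, h, ← RingHom.map_dotProduct, hq a c h, sub_self]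

end FieldExtension

section Convex

variable {𝕜 E : Type*} [Field 𝕜] [LinearOrder 𝕜] [IsStrictOrderedRing 𝕜] [AddCommGroup E]
  [Module 𝕜 E]

theorem Convex.mem_of_add_smul_mem_of_sub_smul_mem {C : Set E} (hC : Convex 𝕜 C) {x v : E}
    {s t : 𝕜} (hs : 0 < s) (ht : 0 < t) (h₁ : x + s • v ∈ C) (h₂ : x - t • v ∈ C) : x ∈ C := by
  have hst : 0 < s + t := add_pos hs ht
  convert hC h₁ h₂ (div_pos ht hst).le (div_pos hs hst).le (by field_simp; ring) using 1
  match_scalars <;> field_simp <;> ring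

theorem add_smul_mem_convexHull_of_add_mem [Archimedean 𝕜] {s : Set E} {v : E}
    (hs : ∀ y ∈ s, y + v ∈ s) {x : E} (hx : x ∈ convexHull 𝕜 s) {t : 𝕜} (ht : 0 ≤ t) :
    x + t • v ∈ convexHull 𝕜 s := by
  have hv : ∀ y ∈ convexHull 𝕜 s, y + v ∈ convexHull 𝕜 s := by
    have : v +ᵥ s ⊆ s := by
      rintro _ ⟨y, hy, rfl⟩
      simpa [add_comm] using hs y hy
    intro y hy
    have := convexHull_mono this (convexHull_vadd (𝕜 := 𝕜) v s ▸ Set.vadd_mem_vadd_set hy)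
    rwa [vadd_eq_add, add_comm] at this
  have hN (N : ℕ) : x + (N : 𝕜) • v ∈ convexHull 𝕜 s := by
    induction N with
    | zero => simpa using hx
    | succ N ih => simpa [add_smul, add_assoc] using hv _ ih
  obtain ⟨N, hN'⟩ := exists_nat_gt t
  have hNpos : (0 : 𝕜) < N := ht.trans_lt hN'
  have := (convex_convexHull 𝕜 s).add_smul_mem hx (hN N)
    ⟨div_nonneg ht hNpos.le, (div_le_one hNpos).mpr hN'.le⟩
  rwa [smul_smul, div_mul_cancel₀ _ hNpos.ne'] at this

theorem add_smul_mem_convexHull_of_add_mem_of_sub_mem [Archimedean 𝕜] {s : Set E} {v : E}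
    (hadd : ∀ y ∈ s, y + v ∈ s) (hsub : ∀ y ∈ s, y - v ∈ s) {x : E} (hx : x ∈ convexHull 𝕜 s)
    (t : 𝕜) : x + t • v ∈ convexHull 𝕜 s := by
  rcases le_total 0 t with ht | ht
  · exact add_smul_mem_convexHull_of_add_mem hadd hx ht
  · have := add_smul_mem_convexHull_of_add_mem (v := -v) (by simpa [← sub_eq_add_neg] using hsub)
      hx (neg_nonneg.mpr ht)
    rwa [neg_smul_neg] at this

end Convex

theorem exists_pos_first_hit {m : Type*} [Fintype m] {α β c : m → ℝ} (hα : ∀ i, α i ≤ c i)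
    (hβ : ∀ i, α i = c i → β i ≤ 0) (hpos : ∃ i, 0 < β i) :
    ∃ t, 0 < t ∧ (∀ i, α i + t * β i ≤ c i) ∧ ∃ i, α i + t * β i = c i ∧ 0 < β i := by
  classical
  set S := univ.filter fun i => 0 < β i
  have hS : S.Nonempty := by simpa [S, Finset.filter_nonempty_iff] using hpos
  have hmemS {i} : i ∈ S ↔ 0 < β i := by simp [S]
  have hslack {i} (hi : 0 < β i) : α i < c i :=
    (hα i).lt_of_ne fun h => (hβ i h).not_gt hi
  set t := S.inf' hS fun i => (c i - α i) / β i
  have ht : 0 < t := (Finset.lt_inf'_iff _).mpr fun i hi =>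
    div_pos (sub_pos.mpr (hslack (hmemS.mp hi))) (hmemS.mp hi)
  refine ⟨t, ht, fun i => ?_, ?_⟩
  · rcases lt_or_ge 0 (β i) with hi | hi
    · have := S.inf'_le (fun i => (c i - α i) / β i) (hmemS.mpr hi)
      rw [le_div_iff₀ hi] at this
      linarith
    · nlinarith [hα i]
  · obtain ⟨i, hi, hti⟩ := S.exists_mem_eq_inf' hS fun i => (c i - α i) / β i
    refine ⟨i, ?_, hmemS.mp hi⟩
    rw [show t = (c i - α i) / β i from hti, div_mul_cancel₀ _ (hmemS.mp hi).ne']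
    ring

section Polyhedron

variable {m n : Type*} [Fintype n] (a : m → n → ℚ) (b : m → ℚ)

def polyhedron : Set (n → ℝ) :=
  {x | ∀ i, (algebraMap ℚ ℝ ∘ a i) ⬝ᵥ x ≤ algebraMap ℚ ℝ (b i)}

def slack (x : n → ℝ) : Set m :=
  {i | (algebraMap ℚ ℝ ∘ a i) ⬝ᵥ x < algebraMap ℚ ℝ (b i)}

def rationalPoints : Set (n → ℝ) :=
  polyhedron a b ∩ Set.range (algebraMap ℚ ℝ ∘ ·)

variable {a b}

theorem algebraMap_comp_mem_polyhedron_iff {q : n → ℚ} :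
    algebraMap ℚ ℝ ∘ q ∈ polyhedron a b ↔ ∀ i, a i ⬝ᵥ q ≤ b i := by
  simp [polyhedron, ← RingHom.map_dotProduct]

theorem add_mem_rationalPoints {w : n → ℚ} (hw : ∀ i, a i ⬝ᵥ w ≤ 0) {y : n → ℝ}
    (hy : y ∈ rationalPoints a b) : y + algebraMap ℚ ℝ ∘ w ∈ rationalPoints a b := by
  obtain ⟨hyP, q, rfl⟩ := hy
  have hcast : algebraMap ℚ ℝ ∘ q + algebraMap ℚ ℝ ∘ w = algebraMap ℚ ℝ ∘ (q + w) := by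
    ext; simp
  rw [hcast]
  refine ⟨algebraMap_comp_mem_polyhedron_iff.mpr fun i => ?_, q + w, rfl⟩
  rw [dotProduct_add]
  linarith [algebraMap_comp_mem_polyhedron_iff.mp hyP i, hw i]

theorem sub_mem_rationalPoints {w : n → ℚ} (hw : ∀ i, 0 ≤ a i ⬝ᵥ w) {y : n → ℝ}
    (hy : y ∈ rationalPoints a b) : y - algebraMap ℚ ℝ ∘ w ∈ rationalPoints a b := by
  have := add_mem_rationalPoints (w := -w) (by simpa using hw) hy
  simpa [sub_eq_add_neg] using this

theorem exists_add_smul_mem_polyhedron_slack_ssubset [Fintype m] {x u : n → ℝ}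
    (hx : x ∈ polyhedron a b) (hu : ∀ i ∉ slack a b x, (algebraMap ℚ ℝ ∘ a i) ⬝ᵥ u = 0)
    (hpos : ∃ i, 0 < (algebraMap ℚ ℝ ∘ a i) ⬝ᵥ u) :
    ∃ t : ℝ, 0 < t ∧ x + t • u ∈ polyhedron a b ∧ slack a b (x + t • u) ⊂ slack a b x := by
  obtain ⟨t, ht, hle, i, hi, hβi⟩ := exists_pos_first_hit hx
    (fun i h => (hu i h.not_lt).le) hpos
  have hdot (i : m) : (algebraMap ℚ ℝ ∘ a i) ⬝ᵥ (x + t • u) =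
      (algebraMap ℚ ℝ ∘ a i) ⬝ᵥ x + t * (algebraMap ℚ ℝ ∘ a i) ⬝ᵥ u := by
    rw [dotProduct_add, dotProduct_smul, smul_eq_mul]
  refine ⟨t, ht, fun i => (hdot i).trans_le (hle i), Set.ssubset_iff_subset_ne.mpr ⟨?_, ?_⟩⟩
  · intro j hj
    by_contra hj'
    have hsame := hdot j
    rw [hu j hj', mul_zero, add_zero] at hsame
    exact hj' (by simpa only [slack, Set.mem_ofPred_eq, hsame] using hj)
  · have hislack : i ∈ slack a b x := by_contra fun h => hβi.ne' (hu i h)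
    intro heq
    rw [← heq] at hislack
    simp only [slack, Set.mem_ofPred_eq, hdot] at hislack
    exact hislack.ne hi

theorem mem_convexHull_rationalPoints_of_tight_ker_le {x : n → ℝ} (hx : x ∈ polyhedron a b)
    (hker : ∀ w : n → ℚ, (∀ i ∉ slack a b x, a i ⬝ᵥ w = 0) → ∀ i, a i ⬝ᵥ w = 0) :
    x ∈ convexHull ℝ (rationalPoints a b) := by
  obtain ⟨q, k, e, w, rfl, hrel⟩ := exists_eq_algebraMap_comp_add_sum_smul (K := ℚ) x
  have hw (l : Fin k) (i : m) : a i ⬝ᵥ w l = 0 :=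
    hker (w l) (fun j hj => (hrel _ _ (le_antisymm (hx j) (not_lt.mp hj))).2 l) i
  have hq : algebraMap ℚ ℝ ∘ q ∈ rationalPoints a b := by
    refine ⟨algebraMap_comp_mem_polyhedron_iff.mpr fun i => ?_, q, rfl⟩
    simpa [dotProduct_add, dotProduct_sum, dotProduct_smul, ← RingHom.map_dotProduct, hw]
      using hx i
  have hsum (s : Finset (Fin k)) :
      algebraMap ℚ ℝ ∘ q + ∑ l ∈ s, e l • (algebraMap ℚ ℝ ∘ w l) ∈
        convexHull ℝ (rationalPoints a b) := by
    induction s using Finset.induction_on with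
    | empty => simpa using subset_convexHull ℝ _ hq
    | insert l s hl ih =>
      rw [sum_insert hl, add_left_comm, add_comm]
      exact add_smul_mem_convexHull_of_add_mem_of_sub_mem
        (fun _ => add_mem_rationalPoints fun i => (hw l i).le)
        (fun _ => sub_mem_rationalPoints fun i => (hw l i).ge) ih (e l)
  exact hsum univ

theorem mem_convexHull_rationalPoints_of_line [Fintype m] {x : n → ℝ}
    (hx : x ∈ polyhedron a b) {w : n → ℚ} (hwT : ∀ i ∉ slack a b x, a i ⬝ᵥ w = 0)
    (hw : ∃ i, a i ⬝ᵥ w ≠ 0)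
    (ih : ∀ y ∈ polyhedron a b, slack a b y ⊂ slack a b x →
      y ∈ convexHull ℝ (rationalPoints a b)) :
    x ∈ convexHull ℝ (rationalPoints a b) := by
  have hmove (v : n → ℚ) (hvT : ∀ i ∉ slack a b x, a i ⬝ᵥ v = 0) (hv : ∃ i, 0 < a i ⬝ᵥ v) :
      ∃ t : ℝ, 0 < t ∧ x + t • (algebraMap ℚ ℝ ∘ v) ∈ convexHull ℝ (rationalPoints a b) := by
    obtain ⟨t, ht, hxt, hlt⟩ := exists_add_smul_mem_polyhedron_slack_ssubset hx
      (u := algebraMap ℚ ℝ ∘ v) (fun i hi => by simp [← RingHom.map_dotProduct, hvT i hi])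
      (by simpa [← RingHom.map_dotProduct] using hv)
    exact ⟨t, ht, ih _ hxt hlt⟩
  obtain ⟨i₀, hi₀⟩ := hw
  wlog hpos : 0 < a i₀ ⬝ᵥ w generalizing w
  · exact this (w := -w) (by simpa using hwT) (by simpa using hi₀)
      (by simpa using hi₀.lt_or_gt.resolve_right hpos)
  obtain ⟨t, ht, hxt⟩ := hmove w hwT ⟨i₀, hpos⟩
  by_cases hback : ∃ i, 0 < a i ⬝ᵥ (-w)
  · obtain ⟨s, hs, hxs⟩ := hmove (-w) (by simpa using hwT) hback
    exact (convex_convexHull ℝ _).mem_of_add_smul_mem_of_sub_smul_mem ht hs hxt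
      (by simpa [sub_eq_add_neg] using hxs)
  · push Not at hback
    simpa using add_smul_mem_convexHull_of_add_mem (fun _ => add_mem_rationalPoints hback) hxt ht.le

theorem polyhedron_subset_convexHull_rationalPoints [Fintype m] :
    polyhedron a b ⊆ convexHull ℝ (rationalPoints a b) := by
  intro x hx
  induction hk : (slack a b x).ncard using Nat.strong_induction_on generalizing x with
  | _ k ih =>
    by_cases hker : ∀ w : n → ℚ, (∀ i ∉ slack a b x, a i ⬝ᵥ w = 0) → ∀ i, a i ⬝ᵥ w = 0
    · exact mem_convexHull_rationalPoints_of_tight_ker_le hx hker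
    push Not at hker
    obtain ⟨w, hwT, hw⟩ := hker
    exact mem_convexHull_rationalPoints_of_line hx hwT hw fun y hy hlt =>
      ih _ (hk ▸ Set.ncard_lt_ncard hlt) hy rfl

end Polyhedron

/-- Every point of a nonempty rational polyhedral set is a convex combination of finitely
many rational points of the set. -/
theorem stmt_1 (n : ℕ) (P : Set (Fin n → ℝ))
    (hpoly : ∃ (m : ℕ) (a : Fin m → Fin n → ℚ) (b : Fin m → ℚ),
      P = {x | ∀ i, ∑ j, (a i j : ℝ) * x j ≤ (b i : ℝ)}) :
    ∀ x ∈ P, ∃ (r : ℕ) (q : Fin r → Fin n → ℚ) (c : Fin r → ℝ),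
      (∀ α, (fun j => (q α j : ℝ)) ∈ P) ∧
      (∀ α, 0 < c α) ∧ (∑ α, c α = 1) ∧
      x = ∑ α, c α • (fun j => (q α j : ℝ)) := by
  obtain ⟨m, a, b, rfl⟩ := hpoly
  -- `P` is `polyhedron a b` and `fun j => (q j : ℝ)` is `algebraMap ℚ ℝ ∘ q`, up to unfolding.
  intro x hx
  obtain ⟨ι, _, z, c, hz, -, hc, hc1, rfl⟩ :=
    eq_pos_convex_span_of_mem_convexHull
      (polyhedron_subset_convexHull_rationalPoints (a := a) (b := b) hx)
  choose q hq using fun i => (hz ⟨i, rfl⟩).2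
  have hqP (i : ι) : algebraMap ℚ ℝ ∘ q i ∈ polyhedron a b := by
    simpa only [← hq i] using (hz ⟨i, rfl⟩).1
  let e := Fintype.equivFin ι
  refine ⟨Fintype.card ι, fun α => q (e.symm α), fun α => c (e.symm α), fun α => hqP _,
    fun α => hc _, by rwa [e.symm.sum_comp c], ?_⟩
  rw [← e.symm.sum_comp]
  simp only [← hq]
  rfl
end

section
/- Let P ⊆ ℝ^n be a compact convex set (a polytope), let {f_t}_{t∈T} be a family of affine functions on ℝ^n, and set Q = {x ∈ P : f_t(x) ≤ 0 for all t ∈ T}. Suppose there exists x₀ ∈ Q with f_t(x₀) = 0 for all t ∈ T. Then Q equals the convex hull of {x₀} ∪ (Q ∩ ∂P), where ∂P is the relative boundary of P. -/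
/-!
Along the ray from `x₀` through a point `x ∈ Q`, every `f t` equals `c * f t x`, since it vanishes
at `x₀`; so the ray stays in `Q` as long as it stays in `P`. By compactness the ray leaves `P` at a
last point `y`, which lies on the relative boundary of `P` because the ray runs inside the affine
span of `P`. Then `x` lies on the segment `[x₀, y]`, and the reverse inclusion is convexity of `Q`.
-/

open AffineMap Set

theorem IsGreatest.notMem_interior {α : Type*} [LinearOrder α] [TopologicalSpace α]
    [OrderTopology α] [NoMaxOrder α] [DenselyOrdered α] {S : Set α} {b : α}
    (hb : IsGreatest S b) : b ∉ interior S := by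
  intro h
  obtain ⟨u, hbu, hu⟩ := exists_Ico_subset_of_mem_nhds (mem_interior_iff_mem_nhds.1 h) (exists_gt b)
  obtain ⟨c, hbc, hcu⟩ := exists_between hbu
  exact (hb.2 (hu ⟨hbc.le, hcu⟩)).not_gt hbc

theorem AffineMap.apply_lineMap_of_apply_eq_zero {k V P : Type*} [CommRing k] [AddCommGroup V]
    [Module k V] [AddTorsor V P] (f : P →ᵃ[k] k) {x₀ : P} (hf : f x₀ = 0) (x : P) (c : k) :
    f (lineMap x₀ x c) = c * f x := by
  simp [hf, lineMap_apply_module]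

theorem mem_segment_lineMap_of_one_le {E : Type*} [AddCommGroup E] [Module ℝ E] (x₀ x : E)
    {b : ℝ} (hb : 1 ≤ b) : x ∈ segment ℝ x₀ (lineMap x₀ x b) := by
  rw [segment_eq_image_lineMap]
  refine ⟨b⁻¹, ⟨by positivity, inv_le_one_of_one_le₀ hb⟩, ?_⟩
  rw [lineMap_lineMap_right, inv_mul_cancel₀ (by positivity), lineMap_apply_one]

theorem Convex.sep_forall_affine_nonpos {E ι : Type*} [AddCommGroup E] [Module ℝ E] {P : Set E}
    (hP : Convex ℝ P) (f : ι → E →ᵃ[ℝ] ℝ) : Convex ℝ {x ∈ P | ∀ t, f t x ≤ 0} := by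
  have hQ : {x ∈ P | ∀ t, f t x ≤ 0} = P ∩ ⋂ t, f t ⁻¹' Iic 0 := by ext; simp
  exact hQ ▸ hP.inter (convex_iInter fun t => (convex_Iic 0).affine_preimage (f t))

section LineMap

variable {E : Type*} [NormedAddCommGroup E] [NormedSpace ℝ E]

theorem isCompact_preimage_lineMap {s : Set E} (hs : IsCompact s) {x₀ x : E} (hne : x₀ ≠ x) :
    IsCompact (lineMap x₀ x ⁻¹' s : Set ℝ) := by
  have hL : (lineMap x₀ x : ℝ → E) = (· + x₀) ∘ fun c : ℝ => c • (x - x₀) := by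
    ext c; simp [lineMap_apply_module', add_comm]
  rw [hL]
  exact ((Homeomorph.addRight x₀).isClosedEmbedding.comp
    (isClosedEmbedding_smul_left (sub_ne_zero.2 hne.symm))).isCompact_preimage hs

theorem mem_interior_preimage_lineMap_of_mem_intrinsicInterior {s : Set E} {x₀ x : E}
    (hx₀ : x₀ ∈ affineSpan ℝ s) (hx : x ∈ affineSpan ℝ s) {b : ℝ}
    (hb : lineMap x₀ x b ∈ intrinsicInterior ℝ s) :
    b ∈ interior (lineMap x₀ x ⁻¹' s) := by
  let γ : ℝ → affineSpan ℝ s := fun c => ⟨lineMap x₀ x c, lineMap_mem c hx₀ hx⟩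
  have hγ : Continuous γ := lineMap_continuous.subtype_mk _
  obtain ⟨y, hy, hyb⟩ := hb
  have hγb : γ b = y := Subtype.ext hyb.symm
  exact preimage_interior_subset_interior_preimage hγ (by rwa [mem_preimage, hγb])

theorem exists_one_le_lineMap_mem_intrinsicFrontier {s : Set E} (hs : IsCompact s) {x₀ x : E}
    (hx₀ : x₀ ∈ s) (hx : x ∈ s) (hne : x₀ ≠ x) :
    ∃ b : ℝ, 1 ≤ b ∧ lineMap x₀ x b ∈ intrinsicFrontier ℝ s := by
  obtain ⟨b, hbs, hbmax⟩ := (isCompact_preimage_lineMap hs hne).exists_isGreatest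
    ⟨1, by simpa using hx⟩
  refine ⟨b, hbmax (by simpa using hx), ?_⟩
  rw [← intrinsicClosure_sdiff_intrinsicInterior]
  exact ⟨subset_intrinsicClosure hbs, fun h => IsGreatest.notMem_interior ⟨hbs, hbmax⟩ <|
    mem_interior_preimage_lineMap_of_mem_intrinsicInterior (subset_affineSpan ℝ s hx₀)
      (subset_affineSpan ℝ s hx) h⟩

end LineMap

/-- If the constraint set Q in a compact convex P contains a point where all the
affine constraints vanish, then Q is the convex hull of that point and Q ∩ ∂P. -/
theorem stmt_7 (n : ℕ) (P : Set (Fin n → ℝ)) (hPc : IsCompact P) (hP : Convex ℝ P)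
    (T : Type*) (f : T → ((Fin n → ℝ) →ᵃ[ℝ] ℝ))
    (Q : Set (Fin n → ℝ)) (hQ : Q = {x ∈ P | ∀ t, f t x ≤ 0})
    (x₀ : Fin n → ℝ) (hx₀ : x₀ ∈ Q) (hx₀0 : ∀ t, f t x₀ = 0) :
    Q = convexHull ℝ ({x₀} ∪ (Q ∩ intrinsicFrontier ℝ P)) := by
  subst hQ
  refine (convexHull_min ?_ (hP.sep_forall_affine_nonpos f)).antisymm' fun x hx => ?_
  · rintro z (rfl | hz)
    exacts [hx₀, hz.1]
  obtain rfl | hne := eq_or_ne x₀ x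
  · exact subset_convexHull ℝ _ (Or.inl rfl)
  obtain ⟨b, hb, hbF⟩ := exists_one_le_lineMap_mem_intrinsicFrontier hPc hx₀.1 hx.1 hne
  have hbQ : lineMap x₀ x b ∈ {x ∈ P | ∀ t, f t x ≤ 0} := by
    refine ⟨intrinsicFrontier_subset hPc.isClosed hbF, fun t => ?_⟩
    rw [(f t).apply_lineMap_of_apply_eq_zero (hx₀0 t)]
    exact mul_nonpos_of_nonneg_of_nonpos (by linarith) (hx.2 t)
  refine (convex_convexHull ℝ _).segment_subset ?_ ?_ (mem_segment_lineMap_of_one_le x₀ x hb)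
  exacts [subset_convexHull ℝ _ (Or.inl rfl), subset_convexHull ℝ _ (Or.inr ⟨hbQ, hbF⟩)]
end
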